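/- For a real square matrix A, if there exists a positive definite matrix P such that A'PA - P is negative definite, then A is Schur stable, i.e., the spectral radius of A is strictly less than 1. -/

import Mathlib

open Matrix

/-- A real matrix `A` is Schur stable: every complex eigenvalue has modulus < 1. -/
def SchurStable {n : Type*} [Fintype n] [DecidableEq n] (A : Matrix n n ℝ) : Prop :=
  ∀ μ : ℂ, μ ∈ spectrum ℂ (A.map (algebraMap ℝ ℂ)) → ‖μ‖ < 1

/-!
Let `A v = μ v` with `v ≠ 0` over `ℂ`. Complexifying preserves positive definiteness, so
`c = v* P v > 0`, and `v* (P - Aᵀ P A) v = (1 - |μ|²) c > 0`; hence `|μ| < 1`.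
-/

open scoped ComplexOrder

namespace Matrix

variable {n : Type*} [Fintype n]

theorem exists_mulVec_eq_smul_of_mem_spectrum {K : Type*} [Field K] [DecidableEq n]
    {M : Matrix n n K} {μ : K} (hμ : μ ∈ spectrum K M) : ∃ v ≠ 0, M *ᵥ v = μ • v := by
  rw [← spectrum_toLin', ← Module.End.hasEigenvalue_iff_mem_spectrum] at hμ
  obtain ⟨v, hv, hv0⟩ := hμ.exists_hasEigenvector
  exact ⟨v, hv0, by simpa using Module.End.mem_eigenspace_iff.mp hv⟩

theorem star_dotProduct_conjTranspose_mul_mul_mulVec_of_mulVec_eq_smul {R : Type*}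
    [CommRing R] [StarRing R] {M : Matrix n n R} {μ : R} {v : n → R} (hv : M *ᵥ v = μ • v)
    (P : Matrix n n R) :
    star v ⬝ᵥ (Mᴴ * P * M) *ᵥ v = star μ * μ * (star v ⬝ᵥ P *ᵥ v) := by
  rw [← mulVec_mulVec, ← mulVec_mulVec, dotProduct_mulVec, ← star_mulVec, hv, star_smul,
    mulVec_smul, smul_dotProduct, dotProduct_smul, smul_eq_mul, smul_eq_mul, mul_assoc]

theorem re_star_dotProduct_map_ofReal_mulVec (R : Matrix n n ℝ) (x : n → ℂ) :
    (star x ⬝ᵥ R.map (algebraMap ℝ ℂ) *ᵥ x).re =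
      (Complex.re ∘ x) ⬝ᵥ R *ᵥ (Complex.re ∘ x) + (Complex.im ∘ x) ⬝ᵥ R *ᵥ (Complex.im ∘ x) := by
  simp only [dotProduct, mulVec, Finset.mul_sum, ← Finset.sum_add_distrib, Complex.re_sum]
  refine Finset.sum_congr rfl fun i _ => Finset.sum_congr rfl fun j _ => ?_
  simp [Complex.mul_re]

theorem PosDef.map_ofReal {R : Matrix n n ℝ} (hR : R.PosDef) :
    (R.map (algebraMap ℝ ℂ)).PosDef := by
  have hH : (R.map (algebraMap ℝ ℂ)).IsHermitian := hR.isHermitian.map _ fun r => by simp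
  refine .of_dotProduct_mulVec_pos hH fun x hx => Complex.pos_iff.mpr
    ⟨?_, (hH.im_star_dotProduct_mulVec_self x).symm⟩
  rw [re_star_dotProduct_map_ofReal_mulVec]
  have hre := hR.posSemidef.dotProduct_mulVec_nonneg (Complex.re ∘ x)
  have him := hR.posSemidef.dotProduct_mulVec_nonneg (Complex.im ∘ x)
  simp only [star_trivial] at hre him
  by_cases h : Complex.re ∘ x = 0
  · have him_ne : Complex.im ∘ x ≠ 0 := fun h' =>
      hx (funext fun i => Complex.ext (congrFun h i) (congrFun h' i))
    simpa [h] using hR.dotProduct_mulVec_pos him_ne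
  · exact add_pos_of_pos_of_nonneg (by simpa using hR.dotProduct_mulVec_pos h) him

end Matrix

/-- If there exists a symmetric positive definite `P` with `AᵀPA - P` negative definite,
then `A` is Schur stable. -/
theorem lyapunov_ineq_schur_stable {n : ℕ} (A : Matrix (Fin n) (Fin n) ℝ)
    (h : ∃ P : Matrix (Fin n) (Fin n) ℝ, P.PosDef ∧ (-(Aᵀ * P * A - P)).PosDef) :
    SchurStable A := by
  obtain ⟨P, hP, hQ⟩ := h
  intro μ hμ
  obtain ⟨v, hv0, hv⟩ := exists_mulVec_eq_smul_of_mem_spectrum hμ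
  set M := A.map (algebraMap ℝ ℂ)
  set c := star v ⬝ᵥ P.map (algebraMap ℝ ℂ) *ᵥ v
  have hc : 0 < c.re := (Complex.pos_iff.mp (hP.map_ofReal.dotProduct_mulVec_pos hv0)).1
  have hQc : (-(Aᵀ * P * A - P)).map (algebraMap ℝ ℂ) =
      P.map (algebraMap ℝ ℂ) - Mᴴ * P.map (algebraMap ℝ ℂ) * M := by
    rw [neg_sub, Matrix.map_sub _ (map_sub _), Matrix.map_mul, Matrix.map_mul,
      ← conjTranspose_eq_transpose_of_trivial,
      conjTranspose_map (algebraMap ℝ ℂ) fun r => (Complex.conj_ofReal r).symm]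
  have hq : star v ⬝ᵥ (-(Aᵀ * P * A - P)).map (algebraMap ℝ ℂ) *ᵥ v =
      ((1 - ‖μ‖ ^ 2 : ℝ) : ℂ) * c := by
    rw [hQc, sub_mulVec, dotProduct_sub,
      star_dotProduct_conjTranspose_mul_mul_mulVec_of_mulVec_eq_smul hv, Complex.star_def,
      Complex.conj_mul']
    push_cast
    ring
  have hq_pos := (Complex.pos_iff.mp (hQ.map_ofReal.dotProduct_mulVec_pos hv0)).1
  rw [hq, Complex.re_ofReal_mul] at hq_pos
  have hμ_sq : ‖μ‖ ^ 2 < 1 := by nlinarith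
  exact (sq_lt_one_iff₀ (norm_nonneg μ)).mp hμ_sq
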